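/- Let i = (i_1, …, i_m) be a word with m ≥ 1, and let (F^0, …, F^{m−1}) be an element of BS^{(i_1, …, i_{m−1})}. Then the quotient space F^{m−1}(i_m + 1) / F^{m−1}(i_m − 1) is a 2-dimensional ℂ-vector space, and the map sending a complete flag F^m with (F^0, …, F^m) ∈ BS^i to the image of F^m(i_m) in this quotient is a bijection from the set of all such flags F^m onto the set of 1-dimensional subspaces of F^{m−1}(i_m + 1) / F^{m−1}(i_m − 1). (Thus the map BS^i → BS^{(i_1,…,i_{m−1})} forgetting the last flag has all fibers in bijection with ℂℙ¹, realizing BS^i as an iterated ℂℙ¹-bundle.) -/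

import Mathlib

noncomputable section

/-- The coordinate subspace `span{e₁, …, e_k}` of `ℂⁿ` (standard basis `eᵢ = Pi.single i 1`). -/
def stdSub (n k : ℕ) : Submodule ℂ (Fin n → ℂ) :=
  Submodule.span ℂ {v : Fin n → ℂ | ∃ t : Fin n, (t : ℕ) < k ∧ v = Pi.single t 1}

/-- A complete flag in `ℂⁿ`: a monotone function `{0,…,n} → Submodule ℂ ℂⁿ`
with `dim F(k) = k`. -/
def IsCompleteFlag (n : ℕ) (F : Fin (n + 1) → Submodule ℂ (Fin n → ℂ)) : Prop :=
  Monotone F ∧ ∀ k : Fin (n + 1), Module.finrank ℂ (F k) = (k : ℕ)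

/-- The standard flag `E(k) = span{e₁, …, e_k}`. -/
def stdFlag (n : ℕ) : Fin (n + 1) → Submodule ℂ (Fin n → ℂ) := fun k => stdSub n (k : ℕ)

/-- Magyar's description of the Bott–Samelson set `BS^i` for a word `i = (i_1, …, i_m)`:
sequences of complete flags `(F^0, …, F^m)` with `F^0 = E` the standard flag, and for each
`1 ≤ k ≤ m`, `F^k(a) = F^{k-1}(a)` for all `a ≠ i_k`.  (The word is indexed so that
`i ⟨k⟩` for `k : Fin m` is the letter `i_{k+1}`.) -/
def InBS (n m : ℕ) (i : Fin m → ℕ)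
    (F : Fin (m + 1) → Fin (n + 1) → Submodule ℂ (Fin n → ℂ)) : Prop :=
  (∀ k, IsCompleteFlag n (F k)) ∧ F 0 = stdFlag n ∧
    ∀ k : Fin m, ∀ a : Fin (n + 1), (a : ℕ) ≠ i k → F k.succ a = F k.castSucc a

/-!
A flag `G` in the fiber agrees with `F = F^{m-1}` except at `r = i_m`, so it is determined by
`G(r)`, which may be any `r`-dimensional space between `F(r - 1)` and `F(r + 1)`. By the
correspondence theorem these are exactly the preimages of the lines in `F(r + 1) / F(r - 1)`,
a plane since `dim F(r ± 1) = r ± 1`.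
-/

open Module

section SubmoduleInterval

variable {K M : Type*} [DivisionRing K] [AddCommGroup M] [Module K M]

theorem Submodule.finrank_map_mkQ_add_finrank [FiniteDimensional K M] {A T : Submodule K M}
    (h : A ≤ T) : finrank K (T.map A.mkQ) + finrank K A = finrank K T := by
  have key := LinearMap.finrank_range_add_finrank_ker (A.mkQ ∘ₗ T.subtype)
  rwa [LinearMap.range_comp, Submodule.range_subtype, LinearMap.ker_comp, Submodule.ker_mkQ,
    (Submodule.comapSubtypeEquivOfLe h).finrank_eq] at key

theorem Submodule.bijOn_comap_subtype {A B : Submodule K M} (hAB : A ≤ B) (k : ℕ) :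
    Set.BijOn (fun S : Submodule K M => S.comap B.subtype)
      {S | A ≤ S ∧ S ≤ B ∧ finrank K S = k}
      {T : Submodule K B | A.comap B.subtype ≤ T ∧ finrank K T = k} := by
  refine Set.InvOn.bijOn (f' := fun T => T.map B.subtype) ⟨?_, ?_⟩ ?_ ?_
  · rintro S ⟨-, hSB, -⟩
    simp only [Submodule.map_comap_subtype, inf_eq_right.mpr hSB]
  · intro T _
    exact Submodule.comap_map_eq_of_injective B.injective_subtype T
  · rintro S ⟨hAS, hSB, hS⟩
    exact ⟨Submodule.comap_mono hAS, (Submodule.comapSubtypeEquivOfLe hSB).finrank_eq.trans hS⟩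
  · rintro T ⟨hAT, hT⟩
    refine ⟨?_, Submodule.map_subtype_le B T, (Submodule.finrank_map_subtype_eq B T).trans hT⟩
    calc A = (A.comap B.subtype).map B.subtype := by
          rw [Submodule.map_comap_subtype, inf_eq_right.mpr hAB]
      _ ≤ T.map B.subtype := Submodule.map_mono hAT

theorem Submodule.bijOn_map_mkQ [FiniteDimensional K M] (A : Submodule K M) {k d : ℕ}
    (hk : finrank K A + d = k) :
    Set.BijOn (fun T : Submodule K M => T.map A.mkQ)
      {T | A ≤ T ∧ finrank K T = k} {W : Submodule K (M ⧸ A) | finrank K W = d} := by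
  refine Set.InvOn.bijOn (f' := fun W => W.comap A.mkQ) ⟨?_, ?_⟩ ?_ ?_
  · rintro T ⟨hAT, -⟩
    simp only [Submodule.comap_map_mkQ, sup_eq_right.mpr hAT]
  · intro W _
    exact Submodule.map_comap_eq_of_surjective A.mkQ_surjective W
  · rintro T ⟨hAT, hT⟩
    have := Submodule.finrank_map_mkQ_add_finrank hAT
    show finrank K (T.map A.mkQ) = d
    omega
  · intro W hW
    have hAW : A ≤ W.comap A.mkQ := fun x hx => by
      rw [Submodule.mem_comap, Submodule.mkQ_apply, (Submodule.Quotient.mk_eq_zero A).mpr hx]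
      exact W.zero_mem
    have := Submodule.finrank_map_mkQ_add_finrank hAW
    rw [Submodule.map_comap_eq_of_surjective A.mkQ_surjective] at this
    have hW : finrank K W = d := hW
    exact ⟨hAW, show finrank K (W.comap A.mkQ) = k by omega⟩

theorem Submodule.bijOn_map_mkQ_comap_subtype [FiniteDimensional K M] {A B : Submodule K M}
    (hAB : A ≤ B) {k d : ℕ} (hk : finrank K A + d = k) :
    Set.BijOn (fun S : Submodule K M => (S.comap B.subtype).map (A.comap B.subtype).mkQ)
      {S | A ≤ S ∧ S ≤ B ∧ finrank K S = k}
      {W : Submodule K (B ⧸ A.comap B.subtype) | finrank K W = d} := by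
  have hA : finrank K (A.comap B.subtype) = finrank K A :=
    (Submodule.comapSubtypeEquivOfLe hAB).finrank_eq
  exact (Submodule.bijOn_map_mkQ _ (hA ▸ hk)).comp (Submodule.bijOn_comap_subtype hAB k)

theorem Submodule.finrank_quotient_comap_subtype_add_finrank [FiniteDimensional K M]
    {A B : Submodule K M} (hAB : A ≤ B) :
    finrank K (B ⧸ A.comap B.subtype) + finrank K A = finrank K B := by
  rw [← (Submodule.comapSubtypeEquivOfLe hAB).finrank_eq]
  exact Submodule.finrank_quotient_add_finrank _

end SubmoduleInterval

theorem Monotone.update_of_le_of_le {α β : Type*} [PartialOrder α] [DecidableEq α] [Preorder β]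
    {f : α → β} (hf : Monotone f) {r : α} {x : β} (hlo : ∀ a < r, f a ≤ x)
    (hhi : ∀ b, r < b → x ≤ f b) : Monotone (Function.update f r x) := by
  intro a b hab
  rcases eq_or_ne a r with rfl | ha
  · rcases eq_or_ne b a with rfl | hb
    · exact le_rfl
    rw [Function.update_self, Function.update_of_ne hb]
    exact hhi b (lt_of_le_of_ne hab (Ne.symm hb))
  rcases eq_or_ne b r with rfl | hb
  · rw [Function.update_self, Function.update_of_ne ha]
    exact hlo a (lt_of_le_of_ne hab ha)
  rw [Function.update_of_ne ha, Function.update_of_ne hb]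
  exact hf hab

theorem IsCompleteFlag.bijOn_eval {n : ℕ} {F : Fin (n + 1) → Submodule ℂ (Fin n → ℂ)}
    (hF : IsCompleteFlag n F) {r : ℕ} (hr0 : 1 ≤ r) (hr : r < n) :
    Set.BijOn (fun G : Fin (n + 1) → Submodule ℂ (Fin n → ℂ) => G ⟨r, by omega⟩)
      {G | IsCompleteFlag n G ∧ ∀ a : Fin (n + 1), (a : ℕ) ≠ r → G a = F a}
      {S | F ⟨r - 1, by omega⟩ ≤ S ∧ S ≤ F ⟨r + 1, by omega⟩ ∧ finrank ℂ S = r} := by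
  set r' : Fin (n + 1) := ⟨r, by omega⟩
  have hne : ∀ a : Fin (n + 1), a ≠ r' → (a : ℕ) ≠ r := fun a ha h => ha (Fin.ext h)
  refine Set.InvOn.bijOn (f' := Function.update F r') ⟨?_, ?_⟩ ?_ ?_
  · rintro G ⟨-, hGF⟩
    funext a
    rcases eq_or_ne a r' with rfl | ha
    · exact Function.update_self _ _ _
    · rw [Function.update_of_ne ha, hGF a (hne a ha)]
  · intro S _
    exact Function.update_self _ _ _
  · rintro G ⟨⟨hmono, hrank⟩, hGF⟩
    refine ⟨?_, ?_, hrank r'⟩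
    · rw [← hGF ⟨r - 1, by omega⟩ (by simp only [ne_eq]; omega)]
      exact hmono (Fin.mk_le_mk.mpr (by omega))
    · rw [← hGF ⟨r + 1, by omega⟩ (by simp only [ne_eq]; omega)]
      exact hmono (Fin.mk_le_mk.mpr (by omega))
  · rintro S ⟨hlo, hhi, hS⟩
    refine ⟨⟨hF.1.update_of_le_of_le ?_ ?_, ?_⟩, ?_⟩
    · intro a ha
      exact (hF.1 (Fin.mk_le_mk.mpr (by have : (a : ℕ) < r := ha; omega))).trans hlo
    · intro b hb
      exact hhi.trans (hF.1 (Fin.mk_le_mk.mpr (by have : r < (b : ℕ) := hb; omega)))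
    · intro a
      rcases eq_or_ne a r' with rfl | ha
      · rw [Function.update_self]; exact hS
      · rw [Function.update_of_ne ha]; exact hF.2 a
    · intro a ha
      exact Function.update_of_ne (fun h => ha (congrArg Fin.val h)) _ _

theorem inBS_snoc_iff {n m : ℕ} {i : Fin (m + 1) → ℕ}
    {F : Fin (m + 1) → Fin (n + 1) → Submodule ℂ (Fin n → ℂ)}
    (hF : InBS n m (fun t : Fin m => i t.castSucc) F)
    (G : Fin (n + 1) → Submodule ℂ (Fin n → ℂ)) :
    InBS n (m + 1) i (Fin.snoc F G) ↔
      IsCompleteFlag n G ∧ ∀ a : Fin (n + 1), (a : ℕ) ≠ i (Fin.last m) → G a = F (Fin.last m) a := by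
  obtain ⟨hflags, hstd, hsteps⟩ := hF
  constructor
  · rintro ⟨hGflags, -, hGsteps⟩
    refine ⟨by simpa using hGflags (Fin.last (m + 1)), fun a ha => ?_⟩
    simpa using hGsteps (Fin.last m) a ha
  · rintro ⟨hG, hGF⟩
    refine ⟨Fin.lastCases (by simpa using hG) (fun k => by simpa using hflags k),
      by simpa using hstd, Fin.lastCases (fun a ha => by simpa using hGF a ha) ?_⟩
    intro k a ha
    rw [Fin.succ_castSucc, Fin.snoc_castSucc, Fin.snoc_castSucc]
    exact hsteps k a ha

theorem stmt4 (n m : ℕ) (hn : 2 ≤ n) (i : Fin (m + 1) → ℕ)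
    (hi : ∀ t, 1 ≤ i t ∧ i t ≤ n - 1)
    (F : Fin (m + 1) → Fin (n + 1) → Submodule ℂ (Fin n → ℂ))
    (hF : InBS n m (fun t : Fin m => i t.castSucc) F) :
    let B : Submodule ℂ (Fin n → ℂ) :=
      F (Fin.last m) ⟨i (Fin.last m) + 1, by have := (hi (Fin.last m)).2; omega⟩
    let A' : Submodule ℂ ↥B :=
      (F (Fin.last m)
          ⟨i (Fin.last m) - 1, by have := (hi (Fin.last m)).2; omega⟩).comap B.subtype
    Module.finrank ℂ (↥B ⧸ A') = 2 ∧
      Set.BijOn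
        (fun G : Fin (n + 1) → Submodule ℂ (Fin n → ℂ) =>
          Submodule.map A'.mkQ
            ((G ⟨i (Fin.last m), by have := (hi (Fin.last m)).2; omega⟩).comap B.subtype))
        {G | InBS n (m + 1) i (Fin.snoc F G)}
        {W : Submodule ℂ (↥B ⧸ A') | Module.finrank ℂ W = 1} := by
  intro B A'
  obtain ⟨hr0, hrn⟩ := hi (Fin.last m)
  have hflag := hF.1 (Fin.last m)
  have hAB : F (Fin.last m) ⟨i (Fin.last m) - 1, by omega⟩ ≤ B :=
    hflag.1 (Fin.mk_le_mk.mpr (by omega))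
  have hrankA :
      finrank ℂ (F (Fin.last m) ⟨i (Fin.last m) - 1, by omega⟩) = i (Fin.last m) - 1 :=
    hflag.2 _
  have hrankB : finrank ℂ B = i (Fin.last m) + 1 := hflag.2 _
  have hfiber : {G | InBS n (m + 1) i (Fin.snoc F G)} = {G | IsCompleteFlag n G ∧
      ∀ a : Fin (n + 1), (a : ℕ) ≠ i (Fin.last m) → G a = F (Fin.last m) a} :=
    Set.ext (inBS_snoc_iff hF)
  refine ⟨?_, ?_⟩
  · have : finrank ℂ (B ⧸ A') + _ = _ :=
      Submodule.finrank_quotient_comap_subtype_add_finrank hAB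
    omega
  · rw [hfiber]
    exact (Submodule.bijOn_map_mkQ_comap_subtype hAB (by omega)).comp
      (hflag.bijOn_eval hr0 (by omega))
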